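/- Let n m : ℕ with 2 ≤ n, 2 ≤ m, m ≠ n, m ≠ n+1 and 3*m ≤ m^2 + n, and let G be a simple graph on a finite vertex type with G.IsSRGWith (n^2) (m*(n-1)) (m^2+n-3*m) (m*(m-1)) (i.e. G has OA(n,m) parameters). Then E(G) = E(Gᶜ). If moreover 2*m ≠ n+1, then G and Gᶜ are not isospectral. -/

import Mathlib

open Finset

/-- The adjacency matrix of a simple graph over `ℝ` is Hermitian. -/
lemma adjMatrix_isHermitian {V : Type*} [Fintype V] (G : SimpleGraph V) [DecidableRel G.Adj] :
    (G.adjMatrix ℝ).IsHermitian := by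
  rw [Matrix.IsHermitian, Matrix.conjTranspose_eq_transpose_of_trivial]
  exact G.isSymm_adjMatrix

/-- The eigenvalues (with multiplicity) of the real adjacency matrix of a simple graph. -/
noncomputable def adjEig {V : Type*} [Fintype V] [DecidableEq V] (G : SimpleGraph V) : V → ℝ := by
  classical
  exact (adjMatrix_isHermitian G).eigenvalues

/-- The energy of a graph : the sum of the absolute values of its adjacency eigenvalues. -/
noncomputable def energy {V : Type*} [Fintype V] [DecidableEq V] (G : SimpleGraph V) : ℝ :=
  ∑ i, |adjEig G i|

/-- The characteristic polynomial of the real adjacency matrix of a simple graph. -/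
noncomputable def charpolyOf {V : Type*} [Fintype V] [DecidableEq V] (G : SimpleGraph V) :
    Polynomial ℝ := by
  classical
  exact (G.adjMatrix ℝ).charpoly

/-!
The adjacency matrix `A` of a strongly regular graph with parameters `(v, k, ℓ, μ)` satisfies
`(A - k)(A - r)(A - s) = 0`, where `r, s` are the roots of `x² - (ℓ - μ) x - (k - μ)`, and the
complement `J - I - A` satisfies the analogous cubic with roots `v - k - 1, -1 - s, -1 - r`.
On a three-point set `{k, r, s}` with `s < 0 ≤ k, r` the function `|x|` agrees with a quadratic
polynomial, so the energy is determined by `tr A = 0` and `tr A² = v k`: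
`E(G) = 2 |s| v k (1 + r) / ((k - s) (r - s))`. For `OA(n, m)` parameters (`r = n - m`, `s = -m`;
`k < v` forces `m < n`) both `G` and `Gᶜ` get energy `2 m (n - 1) (n + 1 - m)`. The degree
`k = m (n - 1)` is an eigenvalue of `G`, but it is one of `Gᶜ` only if `k = n² - k - 1`, that is
`2 m = n + 1`.
-/

theorem adjEig_eq {V : Type*} [Fintype V] [DecidableEq V] (G : SimpleGraph V)
    [DecidableRel G.Adj] : adjEig G = (adjMatrix_isHermitian G).eigenvalues := by
  unfold adjEig
  congr!

theorem charpolyOf_eq {V : Type*} [Fintype V] [DecidableEq V] (G : SimpleGraph V)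
    [DecidableRel G.Adj] : charpolyOf G = (G.adjMatrix ℝ).charpoly := by
  unfold charpolyOf
  congr!

open Polynomial Matrix

theorem spectrum.eval_eq_zero_of_aeval_eq_zero {𝕜 R : Type*} [Field 𝕜] [Ring R] [Algebra 𝕜 R]
    {a : R} {p : 𝕜[X]} (hp : aeval a p = 0) {x : 𝕜} (hx : x ∈ spectrum 𝕜 a) : p.eval x = 0 := by
  cases subsingleton_or_nontrivial R
  · simp [spectrum.of_subsingleton] at hx
  · have := spectrum.subset_polynomial_aeval a p ⟨x, hx, rfl⟩
    rwa [hp, spectrum.zero_eq, Set.mem_singleton_iff] at this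

/-- Lagrange interpolation of `|·|` on `{a, b, c}`. -/
theorem abs_eq_of_mul_sub_mul_sub_mul_sub_eq_zero {x a b c : ℝ} (ha : 0 ≤ a) (hb : 0 ≤ b)
    (hc : c < 0) (hx : (x - a) * (x - b) * (x - c) = 0) :
    |x| = x - 2 * c / ((c - a) * (c - b)) * ((x - a) * (x - b)) := by
  have hca : c - a ≠ 0 := by linarith
  have hcb : c - b ≠ 0 := by linarith
  rcases mul_eq_zero.1 hx with hx | hx
  · rcases mul_eq_zero.1 hx with hx | hx
    all_goals
      obtain rfl := sub_eq_zero.1 hx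
      simp [abs_of_nonneg, *]
  · obtain rfl := sub_eq_zero.1 hx
    rw [abs_of_neg hc]
    field_simp
    ring

theorem lt_of_mul_sub_one_lt_sq {m n : ℕ} (hn : 2 ≤ n) (hmn : m ≠ n) (hmn1 : m ≠ n + 1)
    (h : m * (n - 1) < n ^ 2) : m < n := by
  obtain ⟨p, rfl⟩ : ∃ p, n = p + 1 := ⟨n - 1, by omega⟩
  rw [Nat.add_sub_cancel] at h
  by_contra! hnm
  have : p + 3 ≤ m := by omega
  nlinarith

namespace Matrix.IsHermitian
variable {n : Type*} [Fintype n] [DecidableEq n] {A : Matrix n n ℝ}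

theorem trace_cfc (hA : A.IsHermitian) (f : ℝ → ℝ) :
    (cfc f A).trace = ∑ i, f (hA.eigenvalues i) := by
  rw [hA.cfc_eq, IsHermitian.cfc, Unitary.conjStarAlgAut_apply, trace_mul_cycle,
    Unitary.coe_star_mul_self, one_mul]
  simp

theorem trace_aeval (hA : A.IsHermitian) (p : ℝ[X]) :
    (aeval A p).trace = ∑ i, p.eval (hA.eigenvalues i) := by
  rw [← cfc_polynomial p A hA.isSelfAdjoint, hA.trace_cfc]

theorem eval_eigenvalues_eq_zero (hA : A.IsHermitian) {p : ℝ[X]} (hp : aeval A p = 0) (i : n) :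
    p.eval (hA.eigenvalues i) = 0 :=
  spectrum.eval_eq_zero_of_aeval_eq_zero hp (hA.eigenvalues_mem_spectrum_real i)

theorem sum_abs_eigenvalues_of_aeval_eq_zero (hA : A.IsHermitian) {a b c : ℝ} (ha : 0 ≤ a)
    (hb : 0 ≤ b) (hc : c < 0) (h : aeval A ((X - C a) * (X - C b) * (X - C c)) = 0) :
    ∑ i, |hA.eigenvalues i| =
      A.trace - 2 * c / ((c - a) * (c - b)) * (aeval A ((X - C a) * (X - C b))).trace := by
  rw [hA.trace_aeval, hA.trace_eq_sum_eigenvalues, Finset.mul_sum, ← Finset.sum_sub_distrib]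
  refine Finset.sum_congr rfl fun i _ ↦ ?_
  have hroot := hA.eval_eigenvalues_eq_zero h i
  simp only [eval_mul, eval_sub, eval_X, eval_C] at hroot ⊢
  exact abs_eq_of_mul_sub_mul_sub_mul_sub_eq_zero ha hb hc hroot

end Matrix.IsHermitian

namespace SimpleGraph
variable {V : Type*} {G : SimpleGraph V} [DecidableRel G.Adj]

theorem one_add_adjMatrix_add_compl_adjMatrix [DecidableEq V] :
    1 + G.adjMatrix ℝ + Gᶜ.adjMatrix ℝ = of 1 := by
  rw [← compl_adjMatrix_eq_adjMatrix_compl, one_add_adjMatrix_add_compl_adjMatrix_eq_of_one]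

variable [Fintype V]

namespace IsRegularOfDegree
variable {d : ℕ}

theorem lt_card [Nonempty V] (hG : G.IsRegularOfDegree d) : d < Fintype.card V := by
  obtain ⟨x⟩ := ‹Nonempty V›
  exact hG x ▸ G.degree_lt_card_verts x

theorem adjMatrix_mul_ones (hG : G.IsRegularOfDegree d) :
    G.adjMatrix ℝ * of 1 = (d : ℝ) • of 1 := by
  ext i j
  simp [adjMatrix_mul_apply, hG i]

theorem ones_mul_adjMatrix (hG : G.IsRegularOfDegree d) :
    of 1 * G.adjMatrix ℝ = (d : ℝ) • of 1 := by
  ext i j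
  simp [mul_adjMatrix_apply, hG j]

theorem trace_adjMatrix_mul_self (hG : G.IsRegularOfDegree d) :
    (G.adjMatrix ℝ * G.adjMatrix ℝ).trace = Fintype.card V * d := by
  simp only [trace, diag_apply, adjMatrix_mul_self_apply_self, hG _]
  simp

theorem mem_spectrum_adjMatrix [DecidableEq V] [Nonempty V] (hG : G.IsRegularOfDegree d) :
    (d : ℝ) ∈ spectrum ℝ (G.adjMatrix ℝ) := by
  rw [spectrum.mem_iff, isUnit_iff_isUnit_det, isUnit_iff_ne_zero, not_not,
    ← exists_mulVec_eq_zero_iff]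
  refine ⟨Function.const V 1, Function.const_ne_zero.2 one_ne_zero, funext fun i ↦ ?_⟩
  simp [sub_mulVec, hG i]

theorem energy_eq [DecidableEq V] (hG : G.IsRegularOfDegree d) {r s : ℝ} (hr : 0 ≤ r)
    (hs : s < 0) (h : aeval (G.adjMatrix ℝ) ((X - C (d : ℝ)) * (X - C r) * (X - C s)) = 0) :
    energy G = 2 * -s * Fintype.card V * d * (1 + r) / ((d - s) * (r - s)) := by
  have htrace : (aeval (G.adjMatrix ℝ) ((X - C (d : ℝ)) * (X - C r))).trace =
      Fintype.card V * d * (1 + r) := by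
    simp only [map_mul, map_sub (aeval _), aeval_X, aeval_C, Algebra.algebraMap_eq_smul_one,
      mul_sub, sub_mul, Matrix.mul_smul, Matrix.smul_mul, mul_one, one_mul, smul_smul, trace_sub,
      trace_smul, trace_one, hG.trace_adjMatrix_mul_self, trace_adjMatrix, smul_eq_mul]
    ring
  rw [energy, adjEig_eq, (adjMatrix_isHermitian G).sum_abs_eigenvalues_of_aeval_eq_zero
    d.cast_nonneg hr hs h, trace_adjMatrix, htrace,
    show (s - d) * (s - r) = (d - s) * (r - s) by ring]
  ring

end IsRegularOfDegree

namespace IsSRGWith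
variable [DecidableEq V] {v k ℓ μ : ℕ} {r s : ℝ}

theorem adjMatrix_sub_mul_adjMatrix_sub (h : G.IsSRGWith v k ℓ μ) (h₁ : r + s = ℓ - μ)
    (h₂ : r * s = μ - k) :
    (G.adjMatrix ℝ - r • 1) * (G.adjMatrix ℝ - s • 1) = (μ : ℝ) • of 1 := by
  have hsq : G.adjMatrix ℝ * G.adjMatrix ℝ =
      (k : ℝ) • 1 + (ℓ : ℝ) • G.adjMatrix ℝ + (μ : ℝ) • Gᶜ.adjMatrix ℝ := by
    simpa [← sq, Nat.cast_smul_eq_nsmul] using h.matrix_eq (α := ℝ)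
  rw [← one_add_adjMatrix_add_compl_adjMatrix (G := G), mul_sub, sub_mul, sub_mul, hsq]
  simp only [Matrix.smul_mul, Matrix.mul_smul, one_mul, mul_one, smul_smul, smul_add]
  match_scalars <;> linarith

theorem aeval_adjMatrix_eq_zero (h : G.IsSRGWith v k ℓ μ) (h₁ : r + s = ℓ - μ)
    (h₂ : r * s = μ - k) :
    aeval (G.adjMatrix ℝ) ((X - C (k : ℝ)) * (X - C r) * (X - C s)) = 0 := by
  simp only [map_mul, map_sub (aeval _), aeval_X, aeval_C, Algebra.algebraMap_eq_smul_one]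
  rw [mul_assoc, h.adjMatrix_sub_mul_adjMatrix_sub h₁ h₂, Matrix.mul_smul, sub_mul,
    h.regular.adjMatrix_mul_ones, Matrix.smul_mul, one_mul, sub_self, smul_zero]

theorem aeval_compl_adjMatrix_eq_zero (h : G.IsSRGWith v k ℓ μ) (h₁ : r + s = ℓ - μ)
    (h₂ : r * s = μ - k) :
    aeval (Gᶜ.adjMatrix ℝ) ((X - C ((v : ℝ) - k - 1)) * (X - C (-1 - s)) * (X - C (-1 - r))) =
      0 := by
  have hJ : (of 1 : Matrix V V ℝ) * of 1 = (v : ℝ) • of 1 := by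
    ext i j
    simp [Matrix.mul_apply, h.card]
  have hAc : Gᶜ.adjMatrix ℝ = of 1 - 1 - G.adjMatrix ℝ := by
    rw [← one_add_adjMatrix_add_compl_adjMatrix (G := G)]
    abel
  have hshift (t : ℝ) : Gᶜ.adjMatrix ℝ - (-1 - t) • 1 = of 1 - (G.adjMatrix ℝ - t • 1) := by
    rw [hAc]
    module
  have hquad : (Gᶜ.adjMatrix ℝ - (-1 - s) • 1) * (Gᶜ.adjMatrix ℝ - (-1 - r) • 1) =
      ((v : ℝ) - 2 * k + r + s + μ) • of 1 := by
    rw [hshift, hshift, sub_mul, mul_sub, mul_sub, hJ, mul_sub, sub_mul,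
      h.regular.ones_mul_adjMatrix, h.regular.adjMatrix_mul_ones,
      h.adjMatrix_sub_mul_adjMatrix_sub (r := s) (s := r) (by linarith) (by linarith)]
    simp only [Matrix.mul_smul, Matrix.smul_mul, mul_one, one_mul]
    module
  simp only [map_mul, map_sub (aeval _), aeval_X, aeval_C, Algebra.algebraMap_eq_smul_one]
  rw [mul_assoc, hquad, Matrix.mul_smul, hAc, sub_mul, sub_mul, sub_mul, hJ, one_mul,
    h.regular.adjMatrix_mul_ones, Matrix.smul_mul, one_mul]
  module

theorem energy_eq (h : G.IsSRGWith v k ℓ μ) (h₁ : r + s = ℓ - μ) (h₂ : r * s = μ - k)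
    (hr : 0 ≤ r) (hs : s < 0) :
    energy G = 2 * -s * v * k * (1 + r) / ((k - s) * (r - s)) := by
  rw [h.regular.energy_eq hr hs (h.aeval_adjMatrix_eq_zero h₁ h₂), h.card]

theorem energy_compl_eq (h : G.IsSRGWith v k ℓ μ) (h₁ : r + s = ℓ - μ) (h₂ : r * s = μ - k)
    (hkv : k < v) (hr : 0 ≤ r) (hs : s ≤ -1) :
    energy Gᶜ = 2 * (1 + r) * v * (v - k - 1) * -s / ((v - k + r) * (r - s)) := by
  have hd : ((v - k - 1 : ℕ) : ℝ) = v - k - 1 := by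
    rw [Nat.cast_sub (by omega), Nat.cast_sub hkv.le, Nat.cast_one]
  have hcubic := h.aeval_compl_adjMatrix_eq_zero h₁ h₂
  rw [← hd] at hcubic
  rw [h.compl.regular.energy_eq (by linarith) (by linarith) hcubic, hd, h.card]
  ring

theorem energy_eq_energy_compl (h : G.IsSRGWith v k ℓ μ) (h₁ : r + s = ℓ - μ)
    (h₂ : r * s = μ - k) (hkv : k < v) (hr : 0 ≤ r) (hs : s ≤ -1)
    (hk : (k : ℝ) * (v - k + r) = (v - k - 1) * (k - s)) :
    energy G = energy Gᶜ := by
  have hkv' : (k : ℝ) + 1 ≤ v := by exact_mod_cast hkv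
  have hks : (0 : ℝ) < k - s := by linarith [k.cast_nonneg (α := ℝ)]
  rw [h.energy_eq h₁ h₂ hr (by linarith), h.energy_compl_eq h₁ h₂ hkv hr hs,
    div_eq_div_iff (ne_of_gt (mul_pos hks (by linarith)))
      (ne_of_gt (mul_pos (by linarith) (by linarith)))]
  linear_combination (2 * -s * v * (1 + r) * (r - s)) * hk

theorem eq_of_charpoly_adjMatrix_eq_compl [Nonempty V] (h : G.IsSRGWith v k ℓ μ)
    (h₁ : r + s = ℓ - μ) (h₂ : r * s = μ - k)
    (hcp : (G.adjMatrix ℝ).charpoly = (Gᶜ.adjMatrix ℝ).charpoly) :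
    (k : ℝ) = v - k - 1 ∨ (k : ℝ) = -1 - s ∨ (k : ℝ) = -1 - r := by
  have hk := h.regular.mem_spectrum_adjMatrix
  rw [mem_spectrum_iff_isRoot_charpoly, hcp, ← mem_spectrum_iff_isRoot_charpoly] at hk
  simpa [sub_eq_zero, or_assoc] using
    spectrum.eval_eq_zero_of_aeval_eq_zero (h.aeval_compl_adjMatrix_eq_zero h₁ h₂) hk

end IsSRGWith

end SimpleGraph

/-- A strongly regular graph with `OA(n,m)` parameters,
`m ∉ {n, n+1}`, is equienergetic with its complement; if moreover `2m ≠ n+1`, then it is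
non-isospectral with its complement. -/
theorem OA_parameters_equienergetic {V : Type*} [Fintype V] [DecidableEq V]
    (G : SimpleGraph V) [DecidableRel G.Adj] (n m : ℕ)
    (hn : 2 ≤ n) (hm : 2 ≤ m) (hmn : m ≠ n) (hmn1 : m ≠ n + 1) (hle : 3 * m ≤ m ^ 2 + n)
    (h : G.IsSRGWith (n ^ 2) (m * (n - 1)) (m ^ 2 + n - 3 * m) (m * (m - 1))) :
    energy G = energy Gᶜ ∧ (2 * m ≠ n + 1 → charpolyOf G ≠ charpolyOf Gᶜ) := by
  have : Nonempty V := by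
    rw [← Fintype.card_pos_iff, h.card]
    positivity
  have hkv : m * (n - 1) < n ^ 2 := h.card ▸ h.regular.lt_card
  have hnm : (m : ℝ) < n := by exact_mod_cast lt_of_mul_sub_one_lt_sq hn hmn hmn1 hkv
  have hk : ((m * (n - 1) : ℕ) : ℝ) = m * (n - 1) := by
    rw [Nat.cast_mul, Nat.cast_pred (by omega)]
  have h₁ : (n - m : ℝ) + -m = ((m ^ 2 + n - 3 * m : ℕ) : ℝ) - ((m * (m - 1) : ℕ) : ℝ) := by
    push_cast [Nat.cast_sub hle, Nat.cast_pred (by omega : 0 < m)]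
    ring
  have h₂ : (n - m : ℝ) * -m = ((m * (m - 1) : ℕ) : ℝ) - ((m * (n - 1) : ℕ) : ℝ) := by
    push_cast [hk, Nat.cast_pred (by omega : 0 < m)]
    ring
  have hm1 : (1 : ℝ) ≤ m := by exact_mod_cast (by omega : 1 ≤ m)
  refine ⟨h.energy_eq_energy_compl h₁ h₂ hkv (by linarith) (by linarith) ?_, fun h2m hcp ↦ h2m ?_⟩
  · rw [hk]
    push_cast
    ring
  · rw [charpolyOf_eq, charpolyOf_eq] at hcp
    rcases h.eq_of_charpoly_adjMatrix_eq_compl h₁ h₂ hcp with h' | h' | h' <;>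
      rw [hk] at h' <;> push_cast at h'
    · have : ((n : ℝ) - 1) * (2 * m) = ((n : ℝ) - 1) * (n + 1) := by linear_combination h'
      exact_mod_cast mul_left_cancel₀ (by linarith) this
    all_goals nlinarith
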